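/- The Lagrange spectrum over Q((1/T)), defined as the set of Lagrange constants l(α) for all irrational α ∈ Q((1/T)), equals the set of all positive integers: for every positive integer k there exists α with l(α) = k, and every Lagrange constant is a positive integer. -/

import Mathlib

noncomputable section
open scoped Classical

/-- `ℚ((1/T))`: formal Laurent series in `X = 1/T` over `ℚ`. The exponent `n` of `X`
corresponds to `T^(-n)`. -/
abbrev QLaurent := LaurentSeries ℚ

/-- The embedding of `ℚ[T]` into `ℚ((1/T))`, sending `T` to `X⁻¹ = single (-1) 1`. -/
noncomputable def polyToL : Polynomial ℚ →ₐ[ℚ] QLaurent :=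
  Polynomial.aeval (HahnSeries.single (-1 : ℤ) (1 : ℚ))

/-- The embedding of the rational functions `ℚ(T)` into `ℚ((1/T))`. -/
noncomputable def ratToL (r : RatFunc ℚ) : QLaurent := polyToL r.num / polyToL r.denom

/-- The degree (in `T`) of a formal Laurent series in `1/T`, with `deg 0 = ⊥`. -/
noncomputable def degL (α : QLaurent) : WithBot ℤ :=
  if α = 0 then ⊥ else ((-α.order : ℤ) : WithBot ℤ)

/-- Integer-valued degree in `T` (junk value `0` at `α = 0`). -/
noncomputable def degZ (α : QLaurent) : ℤ := -α.order

/-- The polynomial part `⌊α⌋` of `α ∈ ℚ((1/T))`: truncation to the terms of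
nonnegative degree in `T` (nonpositive exponent of `X = 1/T`). -/
noncomputable def polyPart (α : QLaurent) : QLaurent where
  coeff n := if n ≤ 0 then α.coeff n else 0
  isPWO_support' := α.isPWO_support'.mono (by
    intro n hn
    simp only [Function.mem_support, ne_eq] at hn ⊢
    intro h
    apply hn
    split_ifs <;> simp [h])

/-- The fractional part `{α} = α - ⌊α⌋`. -/
noncomputable def fracPart (α : QLaurent) : QLaurent := α - polyPart α

/-- The complete quotients `α_n` of the continued fraction algorithm:
`α_0 = α`, `α_{n+1} = 1/{α_n}`. -/
noncomputable def cfA (α : QLaurent) : ℕ → QLaurent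
  | 0 => α
  | n + 1 => (fracPart (cfA α n))⁻¹

/-- The partial quotients `a_n = ⌊α_n⌋` of the continued fraction of `α`. -/
noncomputable def pq (α : QLaurent) (n : ℕ) : QLaurent := polyPart (cfA α n)

/-!
Every complete quotient `α_h` of an irrational `α` is irrational, so its fractional part is a
nonzero series of order `≥ 1` in `1/T`, whose inverse has degree `≥ 1` in `T`; this inverse is
`α_{h+1}`, and its polynomial part `a_{h+1}` has the same degree. Hence `l(α) ≥ 1`.

Conversely, for `k ≥ 1` Hensel's lemma in `ℚ[[1/T]]` gives `v` with constant term `1`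
and `v² = v + T^{-2k}`, and `α = T^k v` satisfies `α² = T^k α + 1`, i.e. `α = T^k + 1/α` with `1/α`
of order `k` in `1/T`. So `α = [T^k; T^k, T^k, …]` and `l(α) = k`. This `α` is irrational: it is
integral over the integrally closed ring `ℚ[T]`, so a rational `α` would be a polynomial.
-/

open Filter

theorem PowerSeries.exists_sq_eq_add_X_pow {R : Type*} [CommRing R] {n : ℕ} (hn : n ≠ 0) :
    ∃ v : PowerSeries R, v ^ 2 = v + PowerSeries.X ^ n ∧ PowerSeries.constantCoeff v = 1 := by
  let f : Polynomial (PowerSeries R) :=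
    Polynomial.X ^ 2 - Polynomial.X - Polynomial.C (PowerSeries.X ^ n)
  have hf : f.Monic := by
    unfold f; monicity!
  have hroot : f.eval 1 ∈ Ideal.span {PowerSeries.X} := by
    simpa [f, Ideal.mem_span_singleton] using dvd_pow_self (PowerSeries.X : PowerSeries R) hn
  have hsimple :
      IsUnit (Ideal.Quotient.mk (Ideal.span {PowerSeries.X}) (f.derivative.eval 1)) := by
    simp only [f, Polynomial.derivative_sub, Polynomial.derivative_C, Polynomial.derivative_X_pow,
      Polynomial.derivative_X]
    norm_num
  obtain ⟨v, hv, hv1⟩ := HenselianRing.is_henselian f hf 1 hroot hsimple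
  refine ⟨v, by simpa [f, sub_eq_zero, sub_sub] using hv, ?_⟩
  rwa [Ideal.mem_span_singleton, PowerSeries.X_dvd_iff, map_sub, map_one, sub_eq_zero] at hv1

lemma polyToL_X_pow (n : ℕ) : polyToL (Polynomial.X ^ n) = HahnSeries.single (-(n : ℤ)) 1 := by
  rw [map_pow, polyToL, Polynomial.aeval_X, HahnSeries.single_pow]
  simp

lemma polyToL_coeff (p : Polynomial ℚ) (m : ℤ) :
    (polyToL p).coeff m = if m ≤ 0 then p.coeff (-m).toNat else 0 := by
  induction p using Polynomial.induction_on' with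
  | add p q hp hq =>
    simp only [map_add, HahnSeries.coeff_add, hp, hq, Polynomial.coeff_add]
    split_ifs <;> simp
  | monomial n a =>
    have hC : polyToL (Polynomial.C a) = HahnSeries.single 0 a := by
      rw [polyToL, Polynomial.aeval_C, ← HahnSeries.C_apply]
      exact RingHom.congr_fun (Subsingleton.elim _ _) a
    rw [← Polynomial.C_mul_X_pow_eq_monomial, map_mul, hC, polyToL_X_pow,
      HahnSeries.single_mul_single, mul_one, zero_add, HahnSeries.coeff_single,
      Polynomial.coeff_C_mul_X_pow]
    split_ifs <;> first | rfl | omega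

lemma polyToL_injective : Function.Injective polyToL := by
  intro p q h
  ext n
  simpa [polyToL_coeff] using congrArg (HahnSeries.coeff · (-(n : ℤ))) h

lemma degZ_polyToL_X_pow (n : ℕ) : degZ (polyToL (Polynomial.X ^ n)) = n := by
  rw [degZ, polyToL_X_pow, HahnSeries.order_single one_ne_zero, neg_neg]

lemma degZ_inv {x : QLaurent} (hx : x ≠ 0) : degZ x⁻¹ = x.order := by
  have h := HahnSeries.order_mul (inv_ne_zero hx) hx
  rw [inv_mul_cancel₀ hx, HahnSeries.order_one] at h
  rw [degZ]
  omega

def ratLift : RatFunc ℚ →+* QLaurent :=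
  RatFunc.liftRingHom polyToL.toRingHom
    (nonZeroDivisors_le_comap_nonZeroDivisors_of_injective _ polyToL_injective)

lemma ratToL_eq_ratLift : ratToL = ratLift :=
  funext fun r => (RatFunc.liftRingHom_apply _ _ r).symm

lemma ratLift_algebraMap (p : Polynomial ℚ) :
    ratLift (algebraMap (Polynomial ℚ) (RatFunc ℚ) p) = polyToL p := by
  rw [← ratToL_eq_ratLift, ratToL, RatFunc.num_algebraMap, RatFunc.denom_algebraMap, map_one,
    div_one]

lemma polyPart_coeff (x : QLaurent) (n : ℤ) :
    (polyPart x).coeff n = if n ≤ 0 then x.coeff n else 0 := rfl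

lemma polyPart_add (x y : QLaurent) : polyPart (x + y) = polyPart x + polyPart y := by
  ext n
  simp only [polyPart_coeff, HahnSeries.coeff_add]
  split_ifs <;> simp

lemma polyPart_polyToL (p : Polynomial ℚ) : polyPart (polyToL p) = polyToL p := by
  ext n
  rw [polyPart_coeff, polyToL_coeff]
  split_ifs <;> rfl

lemma polyPart_fracPart (x : QLaurent) : polyPart (fracPart x) = 0 := by
  ext n
  simp only [polyPart_coeff, fracPart, HahnSeries.coeff_sub]
  split_ifs <;> simp

lemma one_le_order_of_polyPart_eq_zero {x : QLaurent} (hx : x ≠ 0) (h : polyPart x = 0) :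
    1 ≤ x.order := by
  by_contra! hlt
  have hcoeff : (polyPart x).coeff x.order = x.coeff x.order := if_pos (by omega)
  rw [h] at hcoeff
  exact HahnSeries.coeff_order_eq_zero.not.mpr hx hcoeff.symm

lemma degZ_le_degZ_polyPart {x : QLaurent} (hx : x ≠ 0) (h : 0 ≤ degZ x) :
    degZ x ≤ degZ (polyPart x) := by
  have hcoeff : (polyPart x).coeff x.order ≠ 0 := by
    rw [polyPart_coeff, if_pos (by rw [degZ] at h; omega)]
    exact HahnSeries.coeff_order_eq_zero.not.mpr hx
  have := HahnSeries.order_le_of_coeff_ne_zero hcoeff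
  rw [degZ, degZ]
  omega

lemma exists_polyToL_eq_polyPart (x : QLaurent) : ∃ p, polyToL p = polyPart x := by
  set N := (1 - x.order).toNat
  refine ⟨∑ i ∈ Finset.range N, Polynomial.monomial i (x.coeff (-i)), ?_⟩
  ext m
  rw [polyToL_coeff, polyPart_coeff, Polynomial.finsetSum_coeff]
  simp only [Polynomial.coeff_monomial, Finset.sum_ite_eq', Finset.mem_range]
  split_ifs with hm hN <;> try rfl
  · congr; omega
  · exact (HahnSeries.coeff_eq_zero_of_lt_order (by omega)).symm

lemma polyPart_mem_fieldRange (x : QLaurent) : polyPart x ∈ ratLift.fieldRange := by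
  obtain ⟨p, hp⟩ := exists_polyToL_eq_polyPart x
  exact ⟨_, (ratLift_algebraMap p).trans hp⟩

section Irrational

variable {x : QLaurent} (hx : x ∉ ratLift.fieldRange)
include hx

lemma fracPart_ne_zero_of_notMem : fracPart x ≠ 0 := by
  intro h
  rw [fracPart, sub_eq_zero] at h
  exact hx (h ▸ polyPart_mem_fieldRange x)

lemma fracPart_notMem : fracPart x ∉ ratLift.fieldRange := fun h =>
  hx (sub_add_cancel x (polyPart x) ▸ add_mem h (polyPart_mem_fieldRange x))

lemma cfA_notMem (n : ℕ) : cfA x n ∉ ratLift.fieldRange := by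
  induction n with
  | zero => exact hx
  | succ n ih => exact fun h => fracPart_notMem ih (inv_inv (fracPart (cfA x n)) ▸ inv_mem h)

lemma one_le_degZ_pq_succ (n : ℕ) : 1 ≤ degZ (pq x (n + 1)) := by
  have hδ : fracPart (cfA x n) ≠ 0 := fracPart_ne_zero_of_notMem (cfA_notMem hx n)
  have hδ_order := one_le_order_of_polyPart_eq_zero hδ (polyPart_fracPart _)
  have hdeg : 1 ≤ degZ (fracPart (cfA x n))⁻¹ := degZ_inv hδ ▸ hδ_order
  exact hdeg.trans (degZ_le_degZ_polyPart (inv_ne_zero hδ) (by omega))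

lemma one_le_limsup_degZ_pq (hbdd : BddAbove (Set.range fun h : ℕ => degZ (pq x h))) :
    1 ≤ atTop.limsup fun h : ℕ => degZ (pq x h) := by
  refine le_limsup_of_frequently_le (Eventually.frequently ?_) hbdd.isBoundedUnder_of_range
  refine eventually_atTop.2 ⟨1, fun h hh => ?_⟩
  exact Nat.sub_add_cancel hh ▸ one_le_degZ_pq_succ hx (h - 1)

end Irrational

lemma pq_eq_of_eq_add_inv {x A : QLaurent} (hA : polyPart A = A) (hinv : polyPart x⁻¹ = 0)
    (hx : x = A + x⁻¹) (n : ℕ) : pq x n = A := by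
  have hpoly : polyPart x = A := by
    conv_lhs => rw [hx]
    rw [polyPart_add, hA, hinv, add_zero]
  have hfrac : fracPart x = x⁻¹ := by rw [fracPart, hpoly, sub_eq_iff_eq_add', ← hx]
  have hcfA : ∀ m, cfA x m = x := fun m => by
    induction m with
    | zero => rfl
    | succ m ih => rw [cfA, ih, hfrac, inv_inv]
  rw [pq, hcfA, hpoly]

lemma mem_range_polyToL_of_sq_eq {x : QLaurent} {A : Polynomial ℚ}
    (hsq : x ^ 2 = polyToL A * x + 1) (hx : x ∈ ratLift.fieldRange) : x ∈ Set.range polyToL := by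
  obtain ⟨r, rfl⟩ := hx
  have hr : r ^ 2 = algebraMap _ _ A * r + 1 :=
    ratLift.injective (by rw [map_pow, map_add, map_mul, ratLift_algebraMap, map_one, hsq])
  have hint : IsIntegral (Polynomial ℚ) r := by
    refine ⟨Polynomial.X ^ 2 - Polynomial.C A * Polynomial.X - 1, by monicity!, ?_⟩
    simp [Polynomial.eval₂_sub, hr]
  obtain ⟨p, rfl⟩ := IsIntegrallyClosed.isIntegral_iff.1 hint
  exact ⟨p, (ratLift_algebraMap p).symm⟩

lemma exists_sq_eq_polyToL_X_pow_mul_add_one {k : ℕ} (hk : k ≠ 0) :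
    ∃ x : QLaurent, x ^ 2 = polyToL (Polynomial.X ^ k) * x + 1 ∧ polyPart x⁻¹ = 0 := by
  obtain ⟨v, hv, hv0⟩ := PowerSeries.exists_sq_eq_add_X_pow (R := ℚ) (n := 2 * k) (by omega)
  set x : QLaurent := HahnSeries.single (-(k : ℤ)) 1 * (v : QLaurent)
  have hinv : x⁻¹ = HahnSeries.single (k : ℤ) 1 * ((v⁻¹ : PowerSeries ℚ) : QLaurent) := by
    refine inv_eq_of_mul_eq_one_right ?_
    rw [mul_mul_mul_comm, HahnSeries.single_mul_single, ← PowerSeries.coe_mul,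
      PowerSeries.mul_inv_cancel v (by simp [hv0])]
    simp
  have hv_coe : (v : QLaurent) ^ 2 = (v : QLaurent) + HahnSeries.single ((2 * k : ℕ) : ℤ) 1 := by
    simpa [HahnSeries.ofPowerSeries_X_pow] using congrArg (HahnSeries.ofPowerSeries ℤ ℚ) hv
  have hsingle : HahnSeries.single (-(k : ℤ)) (1 : ℚ) ^ 2 * HahnSeries.single ((2 * k : ℕ) : ℤ) 1
      = 1 := by
    rw [HahnSeries.single_pow, HahnSeries.single_mul_single]
    simp
  refine ⟨x, ?_, ?_⟩
  · rw [polyToL_X_pow]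
    linear_combination HahnSeries.single (-(k : ℤ)) (1 : ℚ) ^ 2 * hv_coe + hsingle
  · ext n
    rw [hinv, polyPart_coeff, HahnSeries.coeff_single_mul, PowerSeries.coeff_coe]
    split_ifs <;> first | omega | simp

theorem exists_notMem_fieldRange_pq_eq {k : ℕ} (hk : k ≠ 0) :
    ∃ x : QLaurent, x ∉ ratLift.fieldRange ∧ ∀ n, pq x n = polyToL (Polynomial.X ^ k) := by
  obtain ⟨x, hsq, hinv⟩ := exists_sq_eq_polyToL_X_pow_mul_add_one hk
  have hx0 : x ≠ 0 := by rintro rfl; simp at hsq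
  have hx : x = polyToL (Polynomial.X ^ k) + x⁻¹ := by
    field_simp
    linear_combination hsq
  have hpq := pq_eq_of_eq_add_inv (polyPart_polyToL _) hinv hx
  refine ⟨x, fun hmem => ?_, hpq⟩
  obtain ⟨p, rfl⟩ := mem_range_polyToL_of_sq_eq hsq hmem
  have hp : polyToL p = polyToL (Polynomial.X ^ k) := (polyPart_polyToL p).symm.trans (hpq 0)
  rw [hp] at hx hx0
  exact hx0 (inv_eq_zero.1 (left_eq_add.1 hx))

/-- The Lagrange spectrum over `ℚ((1/T))` — the set of Lagrange constants
`l(α) = limsup_h deg a_h` over all irrational `α ∈ ℚ((1/T))` (with the limsup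
finite, i.e. the degrees bounded) — is exactly the set of positive integers. -/
theorem lagrange_spectrum_eq_positive_integers :
    {k : ℤ | ∃ α : QLaurent, α ∉ Set.range ratToL ∧
        BddAbove (Set.range fun h : ℕ => degZ (pq α h)) ∧
        (Filter.atTop.limsup fun h : ℕ => degZ (pq α h)) = k}
      = {k : ℤ | 1 ≤ k} := by
  ext k
  constructor
  · rintro ⟨α, hα, hbdd, rfl⟩
    rw [ratToL_eq_ratLift, ← RingHom.coe_fieldRange] at hα
    exact one_le_limsup_degZ_pq hα hbdd
  · intro (hk : 1 ≤ k)
    lift k to ℕ using by omega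
    obtain ⟨α, hα, hpq⟩ := exists_notMem_fieldRange_pq_eq (k := k) (by omega)
    have hdeg : (fun h => degZ (pq α h)) = fun _ => (k : ℤ) :=
      funext fun h => by rw [hpq, degZ_polyToL_X_pow]
    refine ⟨α, by rwa [ratToL_eq_ratLift, ← RingHom.coe_fieldRange], ?_, ?_⟩ <;> rw [hdeg]
    · exact ⟨k, by rintro _ ⟨_, rfl⟩; rfl⟩
    · exact limsup_const _

end
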